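/- Let p be a prime, s ≥ 2 an integer, m = p^s and k = p^{s−1} + 1. Then there exist constants C > 0 and c with 0 < c ≤ m/2 such that for all n ≥ 1: r_k(ℤ_m^n) ≥ C · (m − p + 1)^n / n^c. -/

import Mathlib

/-- `S ⊆ (ℤ/mℤ)^n` contains no proper `k`-term arithmetic progression. -/
def ProgFree (m k : ℕ) {n : ℕ} (S : Finset (Fin n → ZMod m)) : Prop :=
  ¬ ∃ x d : Fin n → ZMod m,
      (Function.Injective fun i : Fin k => x + (i : ℕ) • d) ∧
      ∀ i : Fin k, x + (i : ℕ) • d ∈ S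

/-- Maximal size of a subset of `(ℤ/mℤ)^n` without a proper `k`-term AP. -/
noncomputable def rAP (k m n : ℕ) : ℕ :=
  sSup {c : ℕ | ∃ S : Finset (Fin n → ZMod m), ProgFree m k S ∧ S.card = c}

/-! Write `m = p ^ (s + 1)`, `q = p ^ s`, and let `A ⊆ ℤ/mℤ` be the complement of the nonzero
multiples of `q`, so `|A| = m - p + 1`. Split `Aⁿ` according to the number `t` of zero
coordinates; no slice contains a proper `(q + 1)`-term progression `x + i • d`, `i ≤ q`.
First, a coordinate with `x j = 0` has `d j = 0`: otherwise the element of order `p` of the cyclic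
group generated by `d j`, a nonzero multiple of `q`, is reached within `q` steps. Second, some
`d j` is a unit (otherwise `q • d = 0`), and reducing mod `q` shows that this coordinate, nonzero
at step `0`, vanishes at some step `i₀ ≤ q`. So strictly more coordinates vanish at step `i₀`
than at step `0`. Pigeonholing over the `n + 1` slices gives
`r ≥ (m - p + 1)ⁿ / (n + 1) ≥ (m - p + 1)ⁿ / (2n)`. -/

open Finset

lemma card_le_rAP {m k n : ℕ} [NeZero m] {S : Finset (Fin n → ZMod m)} (hS : ProgFree m k S) :
    #S ≤ rAP k m n :=
  le_csSup ⟨Fintype.card (Fin n → ZMod m), by rintro _ ⟨T, -, rfl⟩; exact card_le_univ T⟩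
    ⟨S, hS, rfl⟩

section ZeroCountSlice

variable {R : Type*} [Zero R] [DecidableEq R]

def zeroCountSlice (A : Finset R) (n t : ℕ) : Finset (Fin n → R) :=
  {x ∈ Fintype.piFinset fun _ => A | #{j | x j = 0} = t}

lemma card_pow_le_succ_mul_of_card_zeroCountSlice_le (A : Finset R) (n B : ℕ)
    (hB : ∀ t, #(zeroCountSlice A n t) ≤ B) : #A ^ n ≤ (n + 1) * B := by
  have hmaps : Set.MapsTo (fun x : Fin n → R => #{j | x j = 0})
      ↑(Fintype.piFinset fun _ : Fin n => A) ↑(range (n + 1)) := fun x _ =>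
    mem_range.2 (Nat.lt_succ_of_le ((card_filter_le _ _).trans_eq (card_fin n)))
  calc #A ^ n = #(Fintype.piFinset fun _ : Fin n => A) := by simp
    _ = ∑ t ∈ range (n + 1), #(zeroCountSlice A n t) := card_eq_sum_card_fiberwise hmaps
    _ ≤ ∑ _t ∈ range (n + 1), B := sum_le_sum fun t _ => hB t
    _ = (n + 1) * B := by simp

end ZeroCountSlice

def withoutNonzeroMultiples (m q : ℕ) [NeZero m] : Finset (ZMod m) :=
  {a | q ∣ a.val → a = 0}

lemma mem_withoutNonzeroMultiples {m q : ℕ} [NeZero m] {a : ZMod m} :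
    a ∈ withoutNonzeroMultiples m q ↔ (q ∣ a.val → a = 0) := by
  simp [withoutNonzeroMultiples]

namespace ZMod

variable {p s : ℕ}

lemma pow_dvd_val_iff_castHom_eq_zero [NeZero p] (y : ZMod (p ^ (s + 1))) :
    p ^ s ∣ y.val ↔ castHom (pow_dvd_pow p s.le_succ) (ZMod (p ^ s)) y = 0 := by
  rw [castHom_apply, cast_eq_val, natCast_eq_zero_iff]

lemma pow_dvd_val_of_nsmul_eq_zero [NeZero p] {y : ZMod (p ^ (s + 1))} (h : p • y = 0) :
    p ^ s ∣ y.val := by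
  rw [nsmul_eq_mul, ← natCast_zmod_val y, ← Nat.cast_mul, natCast_eq_zero_iff] at h
  exact Nat.dvd_of_mul_dvd_mul_left (NeZero.pos p) (by rwa [← pow_succ'])

lemma pow_nsmul_eq_zero_of_dvd_val [NeZero p] {d : ZMod (p ^ (s + 1))} (h : p ∣ d.val) :
    p ^ s • d = 0 := by
  rw [nsmul_eq_mul, ← natCast_zmod_val d, ← Nat.cast_mul, natCast_eq_zero_iff]
  exact (dvd_of_eq (pow_succ p s)).trans (mul_dvd_mul_left _ h)

variable [hp : Fact p.Prime]

lemma exists_nsmul_ne_zero_pow_dvd_val {d : ZMod (p ^ (s + 1))} (hd : d ≠ 0) :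
    ∃ i ≤ p ^ s, i • d ≠ 0 ∧ p ^ s ∣ (i • d).val := by
  obtain ⟨j, hj, hord⟩ := (Nat.dvd_prime_pow hp.out).1
    (card (p ^ (s + 1)) ▸ addOrderOf_dvd_card (x := d))
  have hj0 : j ≠ 0 := by
    rintro rfl
    exact hd (AddMonoid.addOrderOf_eq_one_iff.1 (by rw [hord, pow_zero]))
  refine ⟨p ^ (j - 1), Nat.pow_le_pow_right hp.out.pos (by omega),
    nsmul_ne_zero_of_lt_addOrderOf (pow_ne_zero _ hp.out.ne_zero) ?_,
    pow_dvd_val_of_nsmul_eq_zero ?_⟩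
  · rw [hord]
    exact Nat.pow_lt_pow_right hp.out.one_lt (by omega)
  · rw [smul_smul, ← pow_succ', Nat.sub_add_cancel (Nat.one_le_iff_ne_zero.2 hj0), ← hord,
      addOrderOf_nsmul_eq_zero]

lemma exists_lt_pow_dvd_val_add_nsmul (a : ZMod (p ^ (s + 1))) {d : ZMod (p ^ (s + 1))}
    (hd : ¬ p ∣ d.val) : ∃ i < p ^ s, p ^ s ∣ (a + i • d).val := by
  set φ := castHom (pow_dvd_pow p s.le_succ) (ZMod (p ^ s))
  have hunit : IsUnit (φ d) := by
    rw [castHom_apply, cast_eq_val, isUnit_iff_coprime]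
    exact (Nat.Coprime.pow_right s ((Nat.coprime_comm.1 (hp.out.coprime_iff_not_dvd.2 hd))))
  refine ⟨(-φ a * (φ d)⁻¹).val, val_lt _, ?_⟩
  rw [pow_dvd_val_iff_castHom_eq_zero, map_add, map_nsmul, nsmul_eq_mul, natCast_zmod_val,
    mul_assoc, inv_mul_of_unit _ hunit, mul_one, add_neg_cancel]

lemma card_filter_pow_dvd_val_le : #{a : ZMod (p ^ (s + 1)) | p ^ s ∣ a.val} ≤ p := by
  calc _ ≤ #((range p).image fun c => ((c * p ^ s : ℕ) : ZMod (p ^ (s + 1)))) := card_le_card ?_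
    _ ≤ p := card_image_le.trans_eq (card_range p)
  intro a ha
  obtain ⟨c, hc⟩ := (mem_filter.1 ha).2
  refine mem_image.2 ⟨c, mem_range.2 ?_, ?_⟩
  · have := val_lt a
    rw [hc, pow_succ] at this
    exact Nat.lt_of_mul_lt_mul_left this
  · rw [mul_comm, ← hc, natCast_zmod_val]

end ZMod

open ZMod

section PrimePower

variable {p s : ℕ} [hp : Fact p.Prime]

lemma sub_add_one_le_card_withoutNonzeroMultiples :
    p ^ (s + 1) - p + 1 ≤ #(withoutNonzeroMultiples (p ^ (s + 1)) (p ^ s)) := by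
  have hsplit := card_filter_add_card_filter_not (s := univ)
    fun a : ZMod (p ^ (s + 1)) => p ^ s ∣ a.val → a = 0
  have hbad : #{a : ZMod (p ^ (s + 1)) | ¬(p ^ s ∣ a.val → a = 0)} ≤ p - 1 := by
    calc _ ≤ #(({a | p ^ s ∣ a.val} : Finset (ZMod (p ^ (s + 1)))).erase 0) := by
          refine card_le_card fun a ha => ?_
          simp only [mem_filter, mem_univ, true_and, Classical.not_imp] at ha
          simpa [ha.2] using ha.1
      _ ≤ p - 1 := by
          rw [card_erase_of_mem (by simp)]
          exact Nat.sub_le_sub_right card_filter_pow_dvd_val_le 1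
  have hp_le : p ≤ p ^ (s + 1) := Nat.le_self_pow (Nat.succ_ne_zero s) p
  have := hp.out.one_lt
  rw [card_univ, ZMod.card] at hsplit
  unfold withoutNonzeroMultiples
  omega

local notation "W" => withoutNonzeroMultiples (p ^ (s + 1)) (p ^ s)

lemma eq_zero_of_forall_nsmul_mem {d : ZMod (p ^ (s + 1))} (h : ∀ i ≤ p ^ s, i • d ∈ W) :
    d = 0 := by
  by_contra hd
  obtain ⟨i, hi, hne, hdvd⟩ := exists_nsmul_ne_zero_pow_dvd_val hd
  exact hne (mem_withoutNonzeroMultiples.1 (h i hi) hdvd)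

lemma exists_add_nsmul_eq_zero_of_forall_mem (a : ZMod (p ^ (s + 1))) {d : ZMod (p ^ (s + 1))}
    (hd : ¬ p ∣ d.val) (h : ∀ i ≤ p ^ s, a + i • d ∈ W) : ∃ i ≤ p ^ s, a + i • d = 0 :=
  let ⟨i, hi, hdvd⟩ := exists_lt_pow_dvd_val_add_nsmul a hd
  ⟨i, hi.le, mem_withoutNonzeroMultiples.1 (h i hi.le) hdvd⟩

lemma progFree_zeroCountSlice (n t : ℕ) :
    ProgFree (p ^ (s + 1)) (p ^ s + 1) (zeroCountSlice W n t) := by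
  rintro ⟨x, d, hinj, hmem⟩
  have hterm (i : ℕ) (hi : i ≤ p ^ s) :
      (∀ j, x j + i • d j ∈ W) ∧ #{j | x j + i • d j = 0} = t := by
    simpa [zeroCountSlice] using hmem ⟨i, Nat.lt_succ_of_le hi⟩
  obtain ⟨j₀, hj₀⟩ : ∃ j, ¬ p ∣ (d j).val := by
    by_contra! hdvd
    have hPd : p ^ s • d = 0 := funext fun j => pow_nsmul_eq_zero_of_dvd_val (hdvd j)
    exact pow_ne_zero s hp.out.ne_zero <| congrArg Fin.val <|
      hinj (a₁ := ⟨p ^ s, by omega⟩) (a₂ := ⟨0, by omega⟩) (by simp [hPd])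
  obtain ⟨i₀, hi₀, hzero⟩ :=
    exists_add_nsmul_eq_zero_of_forall_mem (x j₀) hj₀ fun i hi => (hterm i hi).1 j₀
  have hstart (j : Fin n) (hj : x j = 0) : d j = 0 :=
    eq_zero_of_forall_nsmul_mem fun i hi => by simpa [hj] using (hterm i hi).1 j
  have hlt : #{j | x j = 0} < #{j | x j + i₀ • d j = 0} := by
    refine card_lt_card ((ssubset_iff_of_subset fun j hj => ?_).2 ⟨j₀, ?_, ?_⟩)
    · simp_all
    · simpa using hzero
    · intro hj
      exact hj₀ (by simp [hstart j₀ (by simpa using hj)])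
  have h0 := (hterm 0 (Nat.zero_le _)).2
  simp only [zero_smul, add_zero] at h0
  have := (hterm i₀ hi₀).2
  omega

lemma card_pow_le_succ_mul_rAP (n : ℕ) :
    (p ^ (s + 1) - p + 1) ^ n ≤ (n + 1) * rAP (p ^ s + 1) (p ^ (s + 1)) n :=
  (Nat.pow_le_pow_left sub_add_one_le_card_withoutNonzeroMultiples n).trans
    (card_pow_le_succ_mul_of_card_zeroCountSlice_le _ n _ fun t =>
      card_le_rAP (progFree_zeroCountSlice n t))

end PrimePower

theorem stmt11 (p s m k : ℕ) (hp : p.Prime) (hs : 2 ≤ s)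
    (hm : m = p ^ s) (hk : k = p ^ (s - 1) + 1) :
    ∃ C c : ℝ, 0 < C ∧ 0 < c ∧ c ≤ (m : ℝ) / 2 ∧ ∀ n : ℕ, 1 ≤ n →
      C * ((m : ℝ) - (p : ℝ) + 1) ^ n / (n : ℝ) ^ c ≤ (rAP k m n : ℝ) := by
  have := Fact.mk hp
  obtain ⟨s, rfl⟩ : ∃ s', s = s' + 1 := ⟨s - 1, by omega⟩
  rw [Nat.add_sub_cancel] at hk
  subst hm hk
  have hp_le : p ≤ p ^ (s + 1) := Nat.le_self_pow s.succ_ne_zero p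
  refine ⟨1 / 2, 1, one_half_pos, one_pos, ?_, fun n hn => ?_⟩
  · have : (2 : ℝ) ≤ (p ^ (s + 1) : ℕ) := by exact_mod_cast hp.two_le.trans hp_le
    linarith
  · have hbound : (((p ^ (s + 1) - p + 1) ^ n : ℕ) : ℝ) ≤
        (n + 1) * rAP (p ^ s + 1) (p ^ (s + 1)) n := by
      exact_mod_cast card_pow_le_succ_mul_rAP n
    have hn' : (1 : ℝ) ≤ n := by exact_mod_cast hn
    have hr : (0 : ℝ) ≤ rAP (p ^ s + 1) (p ^ (s + 1)) n := Nat.cast_nonneg _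
    push_cast [Nat.cast_sub hp_le] at hbound ⊢
    rw [Real.rpow_one, div_le_iff₀ (by positivity)]
    nlinarith [mul_nonneg hr (sub_nonneg.2 hn')]
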